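/- Let S be the zero-union of finite semigroups S₁, …, Sₙ with at least two of them non-commutative. Then the commuting graph of S is connected with diameter exactly 2. -/

import Mathlib

open SimpleGraph

/-- The center of a magma/semigroup: elements commuting with everything. -/
def sgCenter (S : Type*) [Mul S] : Set S := {x | ∀ y, x * y = y * x}

/-- The commuting graph of a semigroup: vertices are non-central elements,
distinct vertices adjacent iff they commute. -/
def commGraph (S : Type*) [Mul S] : SimpleGraph {x : S // x ∉ sgCenter S} where
  Adj x y := x ≠ y ∧ (x : S) * y = (y : S) * x
  symm := ⟨fun x y ⟨h, h'⟩ => ⟨h.symm, h'.symm⟩⟩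
  loopless := ⟨fun x ⟨h, _⟩ => h rfl⟩

/-- The extended commuting graph of a semigroup: vertices are all elements,
distinct vertices adjacent iff they commute. -/
def extCommGraph (S : Type*) [Mul S] : SimpleGraph S where
  Adj x y := x ≠ y ∧ x * y = y * x
  symm := ⟨fun x y ⟨h, h'⟩ => ⟨h.symm, h'.symm⟩⟩
  loopless := ⟨fun x ⟨h, _⟩ => h rfl⟩

/-- The graph join of two graphs on disjoint vertex sets. -/
def graphJoin {V W : Type*} (G : SimpleGraph V) (H : SimpleGraph W) :
    SimpleGraph (V ⊕ W) where
  Adj x y := match x, y with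
    | .inl a, .inl b => G.Adj a b
    | .inr a, .inr b => H.Adj a b
    | .inl _, .inr _ => True
    | .inr _, .inl _ => True
  symm := by constructor; rintro (a|a) (b|b) h <;> simp_all [SimpleGraph.Adj.symm]
  loopless := by constructor; rintro (a|a) h; exacts [G.loopless.irrefl a h, H.loopless.irrefl a h]

/-- The graph join of a family of graphs on disjoint vertex sets. -/
def graphJoinFam {ι : Type*} {V : ι → Type*} (G : ∀ i, SimpleGraph (V i)) :
    SimpleGraph (Σ i, V i) where
  Adj x y := x.1 ≠ y.1 ∨ ∃ a b : V x.1, (G x.1).Adj a b ∧ x = ⟨x.1, a⟩ ∧ y = ⟨x.1, b⟩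
  symm := by
    constructor
    rintro ⟨i, a⟩ ⟨j, b⟩ (h | ⟨a', b', hadj, h1, h2⟩)
    · exact Or.inl h.symm
    · cases h1; cases h2
      exact Or.inr ⟨b', a, hadj.symm, rfl, rfl⟩
  loopless := by
    constructor
    rintro ⟨i, a⟩ (h | ⟨a', b', hadj, h1, h2⟩)
    · exact h rfl
    · cases h1
      cases h2
      exact (G i).loopless.irrefl _ hadj

/-- The strong product of two simple graphs. -/
def strongProd {V W : Type*} (G : SimpleGraph V) (H : SimpleGraph W) :
    SimpleGraph (V × W) where
  Adj x y := x ≠ y ∧ (x.1 = y.1 ∨ G.Adj x.1 y.1) ∧ (x.2 = y.2 ∨ H.Adj x.2 y.2)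
  symm := ⟨fun x y ⟨h, h1, h2⟩ =>
    ⟨h.symm, h1.imp Eq.symm (fun h => G.symm.symm _ _ h), h2.imp Eq.symm (fun h => H.symm.symm _ _ h)⟩⟩
  loopless := ⟨fun x ⟨h, _⟩ => h rfl⟩

/-- The strong product of a family of simple graphs. -/
def strongProdFam {ι : Type*} {V : ι → Type*} (G : ∀ i, SimpleGraph (V i)) :
    SimpleGraph (∀ i, V i) where
  Adj x y := x ≠ y ∧ ∀ i, x i = y i ∨ (G i).Adj (x i) (y i)
  symm := ⟨fun x y ⟨h, h'⟩ => ⟨h.symm, fun i => (h' i).imp Eq.symm (fun h => (G i).symm.symm _ _ h)⟩⟩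
  loopless := ⟨fun x ⟨h, _⟩ => h rfl⟩

/-- `p` is a left path in the commuting graph of `S`. -/
def IsLeftPath {S : Type*} [Mul S] {u v : {x : S // x ∉ sgCenter S}}
    (p : (commGraph S).Walk u v) : Prop :=
  p.IsPath ∧ u ≠ v ∧ ∀ w ∈ p.support, (u : S) * (w : S) = (v : S) * (w : S)

/-- The commuting graph of `S` contains a left path. -/
def HasLeftPath (S : Type*) [Mul S] : Prop :=
  ∃ (u v : {x : S // x ∉ sgCenter S}) (p : (commGraph S).Walk u v), IsLeftPath p

/-- The knit degree of `S`: the length of a shortest left path in its commuting graph. -/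
noncomputable def knitDegree (S : Type*) [Mul S] : ℕ :=
  sInf {m | ∃ (u v : {x : S // x ∉ sgCenter S}) (p : (commGraph S).Walk u v),
    IsLeftPath p ∧ p.length = m}

/-- `p` is a *-left path in the extended commuting graph of `S`. -/
def IsStarLeftPath {S : Type*} [Mul S] {u v : S}
    (p : (extCommGraph S).Walk u v) : Prop :=
  p.IsPath ∧ u ≠ v ∧ ∀ w ∈ p.support, u * w = v * w

/-- The extended commuting graph of `S` contains a *-left path. -/
def HasStarLeftPath (S : Type*) [Mul S] : Prop :=
  ∃ (u v : S) (p : (extCommGraph S).Walk u v), IsStarLeftPath p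

/-- The *-knit degree of `S`. -/
noncomputable def starKnitDegree (S : Type*) [Mul S] : ℕ :=
  sInf {m | ∃ (u v : S) (p : (extCommGraph S).Walk u v), IsStarLeftPath p ∧ p.length = m}

/-- The zero-union of a family of semigroups: their disjoint union plus a new zero. -/
def ZeroUnion {n : ℕ} (S : Fin n → Type*) : Type _ := Option (Σ i, S i)

instance {n : ℕ} (S : Fin n → Type*) [∀ i, Mul (S i)] : Mul (ZeroUnion S) where
  mul x y := match x, y with
    | some ⟨i, a⟩, some ⟨j, b⟩ =>
      if h : j = i then some ⟨i, a * (h ▸ b)⟩ else none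
    | _, _ => none

/-!
Elements of different components multiply to zero, so they commute, and an element of a component
is central in the zero-union exactly when it is central in its component. Hence two non-central
elements of different components are adjacent, and two of the same component have a common
neighbour in any other non-commutative component: the diameter is at most 2. Two non-commuting
elements of one non-commutative component are distinct and non-adjacent, so it is exactly 2.
-/

namespace SimpleGraph

variable {V : Type*} {G : SimpleGraph V}

lemma edist_le_two_of_commonNeighbors_nonempty
    (h : ∀ u v, u ≠ v → ¬G.Adj u v → (G.commonNeighbors u v).Nonempty) (u v : V) :
    G.edist u v ≤ 2 := by
  by_cases huv : u = v
  · simp [huv]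
  by_cases hadj : G.Adj u v
  · rw [edist_eq_one_iff_adj.mpr hadj]
    exact one_le_two
  · exact (edist_eq_two_iff.mpr ⟨huv, hadj, h u v huv hadj⟩).le

lemma ediam_eq_two_of_commonNeighbors_nonempty
    (h : ∀ u v, u ≠ v → ¬G.Adj u v → (G.commonNeighbors u v).Nonempty)
    {u v : V} (huv : u ≠ v) (hadj : ¬G.Adj u v) : G.ediam = 2 :=
  le_antisymm (ediam_le_of_edist_le (edist_le_two_of_commonNeighbors_nonempty h))
    ((edist_eq_two_iff.mpr ⟨huv, hadj, h u v huv hadj⟩).symm.trans_le edist_le_ediam)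

end SimpleGraph

namespace ZeroUnion

variable {n : ℕ} {S : Fin n → Type*}

def of (i : Fin n) (a : S i) : ZeroUnion S := some ⟨i, a⟩

lemma of_injective (i : Fin n) : Function.Injective (of (S := S) i) :=
  fun _ _ h => sigma_mk_injective (Option.some_injective _ h)

lemma of_ne_of {i j : Fin n} (h : i ≠ j) (a : S i) (b : S j) : of i a ≠ of j b :=
  fun hab => h (congrArg Sigma.fst (Option.some_injective _ hab))

variable [∀ i, Mul (S i)]

lemma of_mul_of (i : Fin n) (a b : S i) : of i a * of i b = of i (a * b) :=
  dif_pos rfl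

lemma of_mul_of_of_ne {i j : Fin n} (h : i ≠ j) (a : S i) (b : S j) :
    of i a * of j b = none :=
  dif_neg h.symm

lemma of_mul_of_comm {i j : Fin n} (h : i ≠ j) (a : S i) (b : S j) :
    of i a * of j b = of j b * of i a := by
  rw [of_mul_of_of_ne h, of_mul_of_of_ne h.symm]

lemma none_mem_sgCenter : (none : ZeroUnion S) ∈ sgCenter (ZeroUnion S) := by
  rintro (_ | _) <;> rfl

lemma of_mem_sgCenter_iff (i : Fin n) (a : S i) :
    of i a ∈ sgCenter (ZeroUnion S) ↔ a ∈ sgCenter (S i) := by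
  refine ⟨fun h b => of_injective i ?_, fun h => ?_⟩
  · rw [← of_mul_of, ← of_mul_of]
    exact h (of i b)
  · rintro (_ | ⟨j, b⟩)
    · exact none_mem_sgCenter _ |>.symm
    · change of i a * of j b = of j b * of i a
      by_cases hij : i = j
      · subst hij
        rw [of_mul_of, of_mul_of, h b]
      · exact of_mul_of_comm hij a b

lemma exists_eq_of_notMem_sgCenter {x : ZeroUnion S} (hx : x ∉ sgCenter (ZeroUnion S)) :
    ∃ i a, x = of i a := by
  rcases x with _ | ⟨i, a⟩
  · exact absurd none_mem_sgCenter hx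
  · exact ⟨i, a, rfl⟩

end ZeroUnion

section CommGraph

open ZeroUnion

variable {n : ℕ} {S : Fin n → Type*} [∀ i, Mul (S i)]

lemma commGraph_zeroUnion_adj_of_ne {u v : {x : ZeroUnion S // x ∉ sgCenter (ZeroUnion S)}}
    {i j : Fin n} {a : S i} {b : S j} (hu : u.1 = of i a) (hv : v.1 = of j b) (hij : i ≠ j) :
    (commGraph (ZeroUnion S)).Adj u v := by
  refine ⟨fun huv => of_ne_of hij a b ?_, ?_⟩
  · rw [← hu, ← hv, huv]
  · rw [hu, hv]
    exact of_mul_of_comm hij a b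

lemma commGraph_zeroUnion_commonNeighbors_nonempty
    (h : ∀ i, ∃ j ≠ i, ∃ c : S j, c ∉ sgCenter (S j))
    {u v : {x : ZeroUnion S // x ∉ sgCenter (ZeroUnion S)}}
    (hadj : ¬(commGraph (ZeroUnion S)).Adj u v) :
    ((commGraph (ZeroUnion S)).commonNeighbors u v).Nonempty := by
  obtain ⟨i, a, hu⟩ := exists_eq_of_notMem_sgCenter u.2
  obtain ⟨j, b, hv⟩ := exists_eq_of_notMem_sgCenter v.2
  obtain rfl : i = j := by
    by_contra hij
    exact hadj (commGraph_zeroUnion_adj_of_ne hu hv hij)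
  obtain ⟨k, hki, c, hc⟩ := h i
  let w : {x : ZeroUnion S // x ∉ sgCenter (ZeroUnion S)} :=
    ⟨of k c, (of_mem_sgCenter_iff k c).not.mpr hc⟩
  exact ⟨w, (mem_commonNeighbors _).mpr
    ⟨commGraph_zeroUnion_adj_of_ne hu rfl hki.symm,
      commGraph_zeroUnion_adj_of_ne hv rfl hki.symm⟩⟩

lemma commGraph_zeroUnion_exists_not_adj {i : Fin n} {a b : S i} (hab : a * b ≠ b * a) :
    ∃ u v : {x : ZeroUnion S // x ∉ sgCenter (ZeroUnion S)},
      u ≠ v ∧ ¬(commGraph (ZeroUnion S)).Adj u v := by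
  have ha : of i a ∉ sgCenter (ZeroUnion S) :=
    (of_mem_sgCenter_iff i a).not.mpr fun ha => hab (ha b)
  have hb : of i b ∉ sgCenter (ZeroUnion S) :=
    (of_mem_sgCenter_iff i b).not.mpr fun hb => hab (hb a).symm
  refine ⟨⟨of i a, ha⟩, ⟨of i b, hb⟩, fun h => hab ?_, fun ⟨_, h⟩ => hab (of_injective i ?_)⟩
  · rw [of_injective i (congrArg Subtype.val h)]
  · rwa [← of_mul_of, ← of_mul_of]

end CommGraph

theorem commGraph_zeroUnion_connected_diam_two_general {n : ℕ} (S : Fin n → Type*)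
    [∀ i, Semigroup (S i)]
    (NC : Finset (Fin n)) (hNC : ∀ i, i ∈ NC ↔ ¬ ∀ x y : S i, x * y = y * x)
    (h2 : 2 ≤ NC.card) :
    (commGraph (ZeroUnion S)).Connected ∧ (commGraph (ZeroUnion S)).diam = 2 := by
  have hnc : ∀ i ∈ NC, ∃ a b : S i, a * b ≠ b * a := fun i hi => by
    simpa using (hNC i).mp hi
  have hother : ∀ i, ∃ j ≠ i, ∃ c : S j, c ∉ sgCenter (S j) := fun i => by
    obtain ⟨j, hj, hji⟩ := Finset.exists_mem_ne h2 i
    obtain ⟨c, d, hcd⟩ := hnc j hj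
    exact ⟨j, hji, c, fun hc => hcd (hc d)⟩
  obtain ⟨k, hk⟩ : NC.Nonempty := Finset.card_pos.mp (by omega)
  obtain ⟨a, b, hab⟩ := hnc k hk
  obtain ⟨u, v, huv, hadj⟩ := commGraph_zeroUnion_exists_not_adj hab
  have hdiam : (commGraph (ZeroUnion S)).ediam = 2 := ediam_eq_two_of_commonNeighbors_nonempty
    (fun _ _ _ => commGraph_zeroUnion_commonNeighbors_nonempty hother) huv hadj
  have : Nonempty {x : ZeroUnion S // x ∉ sgCenter (ZeroUnion S)} := ⟨u⟩
  exact ⟨connected_of_ediam_ne_top (by simp [hdiam]), by simp [diam, hdiam]⟩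

theorem commGraph_zeroUnion_connected_diam_two {n : ℕ} (S : Fin n → Type*)
    [∀ i, Semigroup (S i)] [∀ i, Fintype (S i)] [∀ i, Nonempty (S i)]
    (NC : Finset (Fin n)) (hNC : ∀ i, i ∈ NC ↔ ¬ ∀ x y : S i, x * y = y * x)
    (h2 : 2 ≤ NC.card) :
    (commGraph (ZeroUnion S)).Connected ∧ (commGraph (ZeroUnion S)).diam = 2 :=
  commGraph_zeroUnion_connected_diam_two_general S NC hNC h2
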